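/- Fix i ≥ 1, u ∈ (0,1), q ∈ [0,1), and α > 0, and set p = α/K. Then K·I₁ → α·i·(1-q)·e^{-α(1-u)}·(u·ln u − u + 1)/ln 2 as K → ∞, where I₁ = i(1-q)(1-p+pu)^K·((pu/(1-p+pu))·log₂ u − log₂(1-p+pu)). -/

import Mathlib

open Filter Real

/-- The lead term I₁ of the mutual information. -/
noncomputable def I1 (K : ℕ) (i : ℕ) (p u q : ℝ) : ℝ :=
  (i : ℝ) * (1 - q) * (1 - p + p * u) ^ K *
    (p * u / (1 - p + p * u) * Real.logb 2 u - Real.logb 2 (1 - p + p * u))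

/-! With `p = α / K` the base `1 - p + p u` is `1 + t / K` for `t = -α (1 - u)`, so
`(1 - p + p u)^K → e^t`, `K log₂ (1 - p + p u) → t / ln 2` and `K p u / (1 - p + p u) → α u`;
the limit `i (1 - q) e^t (α u log₂ u - t / ln 2)` is the claimed one. -/

open Topology

theorem tendsto_one_add_div_natCast (t : ℝ) :
    Tendsto (fun K : ℕ => 1 + t / K) atTop (𝓝 1) := by
  simpa using (tendsto_const_div_atTop_nhds_zero_nat t).const_add 1

theorem tendsto_natCast_mul_logb_one_add_div (b t : ℝ) :
    Tendsto (fun K : ℕ => K * logb b (1 + t / K)) atTop (𝓝 (t / log b)) := by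
  simpa only [logb, mul_div_assoc, Function.comp_def] using
    ((tendsto_mul_log_one_add_div_atTop t).comp tendsto_natCast_atTop_atTop).div_const (log b)

theorem natCast_mul_I1_div (K i : ℕ) (hK : K ≠ 0) (u q α : ℝ) :
    K * I1 K i (α / K) u q = i * (1 - q) * (1 + -α * (1 - u) / K) ^ K *
      (α * u / (1 + -α * (1 - u) / K) * logb 2 u - K * logb 2 (1 + -α * (1 - u) / K)) := by
  have hK : (K : ℝ) ≠ 0 := Nat.cast_ne_zero.mpr hK
  have hbase : 1 - α / K + α / K * u = 1 + -α * (1 - u) / K := by ring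
  rw [I1, hbase]
  field_simp

theorem KI1_tendsto_general (i : ℕ) (u q α : ℝ) :
    Tendsto (fun K : ℕ => (K : ℝ) * I1 K i (α / K) u q) atTop
      (nhds (α * i * (1 - q) * Real.exp (-α * (1 - u)) *
        (u * Real.log u - u + 1) / Real.log 2)) := by
  set t := -α * (1 - u)
  have hlim : Tendsto (fun K : ℕ => i * (1 - q) * (1 + t / K) ^ K *
      (α * u / (1 + t / K) * logb 2 u - K * logb 2 (1 + t / K))) atTop
      (𝓝 (i * (1 - q) * exp t * (α * u / 1 * logb 2 u - t / log 2))) :=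
    (tendsto_const_nhds.mul (tendsto_one_add_div_pow_exp t)).mul
      (((tendsto_const_nhds.div (tendsto_one_add_div_natCast t) one_ne_zero).mul
        tendsto_const_nhds).sub (tendsto_natCast_mul_logb_one_add_div 2 t))
  have hI1 : ∀ᶠ K : ℕ in atTop, i * (1 - q) * (1 + t / K) ^ K *
      (α * u / (1 + t / K) * logb 2 u - K * logb 2 (1 + t / K)) = K * I1 K i (α / K) u q :=
    (eventually_ne_atTop 0).mono fun K hK => (natCast_mul_I1_div K i hK u q α).symm
  convert hlim.congr' hI1 using 2
  simp only [logb, t]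
  ring

/-- With p = α/K, K·I₁ → α·i·(1-q)·e^{-α(1-u)}·(u ln u − u + 1)/ln 2
as K → ∞. -/
theorem KI1_tendsto (i : ℕ) (hi : 1 ≤ i) (u q α : ℝ)
    (hu : u ∈ Set.Ioo (0:ℝ) 1) (hq : q ∈ Set.Ico (0:ℝ) 1) (hα : 0 < α) :
    Tendsto (fun K : ℕ => (K : ℝ) * I1 K i (α / K) u q) atTop
      (nhds (α * i * (1 - q) * Real.exp (-α * (1 - u)) *
        (u * Real.log u - u + 1) / Real.log 2)) :=
  KI1_tendsto_general i u q α
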